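/- arXiv:1112.1687 — 5 statements merged into one kernel-verified Lean document; each statement's English description precedes it below -/
import Mathlib

section
/- Slepian–Wolf one-shot lower bound (single encoder): for any ε ∈ [0,1], any shared randomness U independent of (X,Y), any encoders e_𝒳: 𝒳×𝒰 → 𝒞_𝒳, e_𝒴: 𝒴×𝒰 → 𝒞_𝒴 and decoder g with Pr[g(e_𝒳(X,U), e_𝒴(Y,U), U) ≠ (X,Y)] ≤ ε, it holds that log₂|𝒞_𝒳| ≥ H_0^ε(X|Y). -/
open Finset

/-- A probability mass function on a finite alphabet. -/
def IsPMF {α : Type*} [Fintype α] (P : α → ℝ) : Prop :=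
  (∀ a, 0 ≤ P a) ∧ ∑ a, P a = 1

/-- Marginal on the first coordinate. -/
noncomputable def margX {α β : Type*} [Fintype β] (P : α × β → ℝ) : α → ℝ :=
  fun x => ∑ y, P (x, y)

/-- Marginal on the second coordinate. -/
noncomputable def margY {α β : Type*} [Fintype α] (P : α × β → ℝ) : β → ℝ :=
  fun y => ∑ x, P (x, y)

/-- Rényi entropy of order 0 : log₂ of the support size. -/
noncomputable def H0 {α : Type*} [Fintype α] (P : α → ℝ) : ℝ :=
  Real.logb 2 ((Finset.univ.filter fun a => 0 < P a).card)

/-- Conditional Rényi entropy of order 0: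
`H₀(X|Y) = log₂ max_{y : P_Y(y) > 0} |supp P_{X|Y=y}|`.
(Note `supp P_{X|Y=y} = {x : P_{XY}(x,y) > 0}` when `P_Y(y) > 0`.) -/
noncomputable def H0cond {α β : Type*} [Fintype α] [Fintype β] (P : α × β → ℝ) : ℝ :=
  Real.logb 2 ((((Finset.univ.filter fun y => 0 < margY P y).sup
    fun y => (Finset.univ.filter fun x => 0 < P (x, y)).card : ℕ) : ℝ))

/-- The probability that the two coordinates of a coupling differ. -/
noncomputable def prDiff {α : Type*} [Fintype α] [DecidableEq α] (Q : α × α → ℝ) : ℝ :=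
  ∑ p ∈ Finset.univ.filter fun p : α × α => p.1 ≠ p.2, Q p

/-- `ε`-smooth conditional Rényi entropy of order 0: the infimum of `H₀(X̄|Ȳ)` over
pairs `(X̄,Ȳ)` jointly distributed with `(X,Y) ~ P` such that `Pr[(X̄,Ȳ) ≠ (X,Y)] ≤ ε`. -/
noncomputable def H0condEps {α β : Type*} [Fintype α] [Fintype β]
    [DecidableEq α] [DecidableEq β] (P : α × β → ℝ) (ε : ℝ) : ℝ :=
  sInf { h | ∃ Q : (α × β) × (α × β) → ℝ, IsPMF Q ∧ (∀ p, margY Q p = P p) ∧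
    prDiff Q ≤ ε ∧ h = H0cond (margX Q) }

/-- `ε`-smooth (unconditional) Rényi entropy of order 0 of the joint pair. -/
noncomputable def H0epsJoint {α β : Type*} [Fintype α] [Fintype β]
    [DecidableEq α] [DecidableEq β] (P : α × β → ℝ) (ε : ℝ) : ℝ :=
  sInf { h | ∃ Q : (α × β) × (α × β) → ℝ, IsPMF Q ∧ (∀ p, margY Q p = P p) ∧
    prDiff Q ≤ ε ∧ h = H0 (margX Q) }

/-- Auxiliary: a nonneg bound on every element of the smoothing set. -/
lemma H0cond_nonneg {α β : Type*} [Fintype α] [Fintype β] (P : α × β → ℝ) :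
    0 ≤ H0cond P := by
  unfold H0cond
  set n : ℕ := (Finset.univ.filter fun y => 0 < margY P y).sup
    fun y => (Finset.univ.filter fun x => 0 < P (x, y)).card with hn
  rcases Nat.eq_zero_or_pos n with h | h
  · simp [h]
  · exact Real.logb_nonneg one_lt_two (by exact_mod_cast h)


/-- One-shot Slepian–Wolf lower bound (single encoder): for any protocol with shared
randomness `U` independent of `(X,Y)`, encoders `e𝒳, e𝒴` and decoder `g` with error
probability at most `ε`, the codeword length satisfies `log₂|𝒞_𝒳| ≥ H₀^ε(X|Y)`. -/
theorem sw_one_shot_lower_bound_X {α β υ C1 C2 : Type*}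
    [Fintype α] [Fintype β] [Fintype υ] [Fintype C1] [Fintype C2]
    [DecidableEq α] [DecidableEq β]
    (P : α × β → ℝ) (hP : IsPMF P) (PU : υ → ℝ) (hPU : IsPMF PU)
    (eX : α → υ → C1) (eY : β → υ → C2) (g : C1 → C2 → υ → α × β)
    (ε : ℝ) (hε0 : 0 ≤ ε) (hε1 : ε ≤ 1)
    (herr : ∑ u, ∑ x, ∑ y,
      (if g (eX x u) (eY y u) u ≠ (x, y) then P (x, y) * PU u else 0) ≤ ε) :
    Real.logb 2 (Fintype.card C1) ≥ H0condEps P ε := by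
  obtain ⟨hPnn, hPsum⟩ := hP
  obtain ⟨hUnn, hUsum⟩ := hPU
  -- nonemptiness
  have hαβ : Nonempty (α × β) := by
    by_contra h
    rw [not_nonempty_iff] at h
    simp [Finset.univ_eq_empty] at hPsum
  have hα : Nonempty α := ⟨hαβ.some.1⟩
  have hυ : Nonempty υ := by
    by_contra h
    rw [not_nonempty_iff] at h
    simp [Finset.univ_eq_empty] at hUsum
  have hC1 : Nonempty C1 := ⟨eX hα.some hυ.some⟩
  -- deterministic error
  set err : υ → ℝ := fun u => ∑ q : α × β,
      (if g (eX q.1 u) (eY q.2 u) u ≠ q then P q else 0) with herrdef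
  have herr' : ∑ u, err u * PU u ≤ ε := by
    refine le_trans (le_of_eq ?_) herr
    refine Finset.sum_congr rfl fun u _ => ?_
    rw [Finset.sum_mul, Fintype.sum_prod_type]
    refine Finset.sum_congr rfl fun x _ => ?_
    refine Finset.sum_congr rfl fun y _ => ?_
    by_cases h : g (eX x u) (eY y u) u ≠ (x, y) <;> simp [h]
  have hr : ∃ r, err r ≤ ε := by
    by_contra h
    push_neg at h
    obtain ⟨u₀, hu₀⟩ := Finset.exists_ne_zero_of_sum_ne_zero (by rw [hUsum]; norm_num :
      ∑ u, PU u ≠ 0)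
    have hu₀pos : 0 < PU u₀ := lt_of_le_of_ne (hUnn u₀) (Ne.symm hu₀.2)
    have : ε < ∑ u, err u * PU u := by
      calc ε = ∑ u, ε * PU u := by rw [← Finset.mul_sum, hUsum, mul_one]
      _ < ∑ u, err u * PU u := by
        refine Finset.sum_lt_sum (fun u _ => ?_) ⟨u₀, Finset.mem_univ u₀, ?_⟩
        · exact mul_le_mul_of_nonneg_right (le_of_lt (h u)) (hUnn u)
        · exact mul_lt_mul_of_pos_right (h u₀) hu₀pos
    linarith
  obtain ⟨r, hrε⟩ := hr
  -- the coupling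
  set F : α × β → α × β := fun q => ((g (eX q.1 r) (eY q.2 r) r).1, q.2) with hF
  set Q : (α × β) × (α × β) → ℝ := fun p => if p.1 = F p.2 then P p.2 else 0 with hQ
  have hQnn : ∀ p, 0 ≤ Q p := fun p => by
    by_cases h : p.1 = F p.2 <;> simp [hQ, h, hPnn]
  have hmargY : ∀ q, margY Q q = P q := by
    intro q
    simp [margY, hQ, Finset.sum_ite_eq']
  have hQpmf : IsPMF Q := by
    refine ⟨hQnn, ?_⟩
    rw [Fintype.sum_prod_type_right]
    calc ∑ q, ∑ p, Q (p, q) = ∑ q, P q := Finset.sum_congr rfl fun q _ => hmargY q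
    _ = 1 := hPsum
  have hdiff : prDiff Q ≤ ε := by
    refine le_trans ?_ hrε
    rw [prDiff, Finset.sum_filter, Fintype.sum_prod_type_right, herrdef]
    refine Finset.sum_le_sum fun q _ => ?_
    have h1 : ∑ p, (if p ≠ q then Q (p, q) else 0)
        = if F q ≠ q then P q else 0 := by
      rw [Finset.sum_eq_single (F q)]
      · by_cases h : F q ≠ q <;> simp [hQ, h]
      · intro p _ hp
        by_cases h : p ≠ q <;> simp [hQ, h, hp]
      · simp
    rw [h1]
    by_cases h : F q ≠ q
    · have h2 : g (eX q.1 r) (eY q.2 r) r ≠ q := by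
        intro hc
        apply h
        rw [hF]
        simp [hc]
      simp [h, h2, le_refl]
    · by_cases h2 : g (eX q.1 r) (eY q.2 r) r ≠ q <;> simp [h, h2, hPnn q]
  -- bounding H0cond (margX Q)
  have hbound : H0cond (margX Q) ≤ Real.logb 2 (Fintype.card C1) := by
    unfold H0cond
    set n : ℕ := (Finset.univ.filter fun y => 0 < margY (margX Q) y).sup
      fun y => (Finset.univ.filter fun x => 0 < margX Q (x, y)).card with hn
    have hnle : n ≤ Fintype.card C1 := by
      rw [hn]
      refine Finset.sup_le fun y _ => ?_
      have hsub : (Finset.univ.filter fun x => 0 < margX Q (x, y)) ⊆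
          Finset.univ.image fun c => (g c (eY y r) r).1 := by
        intro x hx
        rw [Finset.mem_filter] at hx
        have hpos : 0 < ∑ q, Q ((x, y), q) := hx.2
        have : ∃ q, 0 < Q ((x, y), q) := by
          by_contra hc
          push_neg at hc
          have : ∑ q, Q ((x, y), q) ≤ 0 :=
            Finset.sum_nonpos fun q _ => hc q
          linarith
        obtain ⟨q, hq⟩ := this
        have heq : (x, y) = F q := by
          by_contra hne
          simp [hQ, hne] at hq
        rw [Finset.mem_image]
        refine ⟨eX q.1 r, Finset.mem_univ _, ?_⟩
        have hy : y = q.2 := congrArg Prod.snd heq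
        have hx' : x = (g (eX q.1 r) (eY q.2 r) r).1 := congrArg Prod.fst heq
        rw [hy, hx']
      calc (Finset.univ.filter fun x => 0 < margX Q (x, y)).card
          ≤ (Finset.univ.image fun c => (g c (eY y r) r).1).card :=
            Finset.card_le_card hsub
        _ ≤ (Finset.univ : Finset C1).card := Finset.card_image_le
        _ = Fintype.card C1 := Finset.card_univ
    rcases Nat.eq_zero_or_pos n with h | h
    · rw [h]
      simp only [Nat.cast_zero, Real.logb_zero]
      exact Real.logb_nonneg one_lt_two (by exact_mod_cast Fintype.card_pos)
    · exact Real.logb_le_logb_of_le one_lt_two (by exact_mod_cast h)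
        (by exact_mod_cast hnle)
  -- conclude via sInf
  have hmem : H0cond (margX Q) ∈ { h | ∃ Q' : (α × β) × (α × β) → ℝ, IsPMF Q' ∧
      (∀ p, margY Q' p = P p) ∧ prDiff Q' ≤ ε ∧ h = H0cond (margX Q') } :=
    ⟨Q, hQpmf, hmargY, hdiff, rfl⟩
  have hbdd : BddBelow { h | ∃ Q' : (α × β) × (α × β) → ℝ, IsPMF Q' ∧
      (∀ p, margY Q' p = P p) ∧ prDiff Q' ≤ ε ∧ h = H0cond (margX Q') } := by
    refine ⟨0, fun h hh => ?_⟩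
    obtain ⟨Q', _, _, _, rfl⟩ := hh
    exact H0cond_nonneg _
  exact le_trans (csInf_le hbdd hmem) hbound
end

section
/- Slepian–Wolf one-shot sum-rate lower bound: under the same protocol assumptions with error probability at most ε, the codeword lengths satisfy log₂|𝒞_𝒳| + log₂|𝒞_𝒴| ≥ H_0^ε(X,Y). -/
open Finset

/-- One-shot Slepian–Wolf sum-rate lower bound: for any protocol with shared
randomness `U` independent of `(X,Y)` and error probability at most `ε`,
`log₂|𝒞_𝒳| + log₂|𝒞_𝒴| ≥ H₀^ε(X,Y)`. -/
theorem sw_one_shot_sum_rate_lower_bound {α β υ C1 C2 : Type*}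
    [Fintype α] [Fintype β] [Fintype υ] [Fintype C1] [Fintype C2]
    [DecidableEq α] [DecidableEq β]
    (P : α × β → ℝ) (hP : IsPMF P) (PU : υ → ℝ) (hPU : IsPMF PU)
    (eX : α → υ → C1) (eY : β → υ → C2) (g : C1 → C2 → υ → α × β)
    (ε : ℝ) (hε0 : 0 ≤ ε) (hε1 : ε ≤ 1)
    (herr : ∑ u, ∑ x, ∑ y,
      (if g (eX x u) (eY y u) u ≠ (x, y) then P (x, y) * PU u else 0) ≤ ε) :
    Real.logb 2 (Fintype.card C1) + Real.logb 2 (Fintype.card C2) ≥ H0epsJoint P ε := by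
  classical
  obtain ⟨hPnn, hPsum⟩ := hP
  obtain ⟨hUnn, hUsum⟩ := hPU
  -- nonemptiness
  have hαβ : Nonempty (α × β) := by
    by_contra h
    rw [not_nonempty_iff] at h
    simp at hPsum
  have hυ : Nonempty υ := by
    by_contra h
    rw [not_nonempty_iff] at h
    simp at hUsum
  -- a u with PU u > 0
  have hu0 : ∃ u, 0 < PU u := by
    by_contra h
    push_neg at h
    have : ∑ u, PU u = 0 :=
      Finset.sum_eq_zero fun u _ => le_antisymm (h u) (hUnn u)
    rw [hUsum] at this; norm_num at this
  obtain ⟨u0, hu0⟩ := hu0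
  -- per-seed error
  set E : υ → ℝ := fun u => ∑ p : α × β,
    if g (eX p.1 u) (eY p.2 u) u ≠ p then P p else 0 with hE
  have hEnn : ∀ u, 0 ≤ E u := by
    intro u
    refine Finset.sum_nonneg fun p _ => ?_
    split
    · exact hPnn p
    · exact le_rfl
  have herr' : ∑ u, PU u * E u ≤ ε := by
    calc ∑ u, PU u * E u
        = ∑ u, ∑ x, ∑ y,
          (if g (eX x u) (eY y u) u ≠ (x, y) then P (x, y) * PU u else 0) := by
          refine Finset.sum_congr rfl fun u _ => ?_
          rw [hE]
          rw [Finset.mul_sum, Fintype.sum_prod_type]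
          refine Finset.sum_congr rfl fun x _ => Finset.sum_congr rfl fun y _ => ?_
          simp [mul_ite, mul_zero, mul_comm]
      _ ≤ ε := herr
  -- a good seed
  have hgood : ∃ u, E u ≤ ε := by
    by_contra h
    push_neg at h
    have hlt : ∑ u, PU u * ε < ∑ u, PU u * E u := by
      refine Finset.sum_lt_sum (fun u _ => ?_) ⟨u0, Finset.mem_univ u0, ?_⟩
      · exact mul_le_mul_of_nonneg_left (le_of_lt (h u)) (hUnn u)
      · exact mul_lt_mul_of_pos_left (h u0) hu0
    rw [← Finset.sum_mul, hUsum, one_mul] at hlt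
    exact absurd (lt_of_lt_of_le hlt herr') (lt_irrefl ε)
  obtain ⟨u, hu⟩ := hgood
  -- the decoder map for seed u
  set dec : α × β → α × β := fun p => g (eX p.1 u) (eY p.2 u) u with hdec
  -- the coupling
  set Q : (α × β) × (α × β) → ℝ :=
    fun q => if q.1 = dec q.2 then P q.2 else 0 with hQ
  have hQnn : ∀ q, 0 ≤ Q q := by
    intro q; rw [hQ]; dsimp only
    split
    · exact hPnn q.2
    · exact le_rfl
  have hQmargY : ∀ p, margY Q p = P p := by
    intro p
    unfold margY
    rw [hQ]
    simp
  have hQsum : ∑ q, Q q = 1 := by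
    rw [Fintype.sum_prod_type, Finset.sum_comm]
    calc ∑ p : α × β, ∑ q : α × β, Q (q, p)
        = ∑ p : α × β, P p := Finset.sum_congr rfl fun p _ => hQmargY p
      _ = 1 := hPsum
  have hQpmf : IsPMF Q := ⟨hQnn, hQsum⟩
  -- prDiff Q = E u
  have hpr : prDiff Q ≤ ε := by
    have : prDiff Q = E u := by
      unfold prDiff
      rw [Finset.sum_filter, Fintype.sum_prod_type, Finset.sum_comm, hE]
      refine Finset.sum_congr rfl fun p _ => ?_
      have : ∀ q : α × β, (if (q, p).1 ≠ (q, p).2 then Q (q, p) else 0)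
          = if q = dec p then (if dec p ≠ p then P p else 0) else 0 := by
        intro q
        rw [hQ]
        dsimp only
        by_cases h1 : q = dec p
        · subst h1; simp
        · simp [h1]
      rw [Finset.sum_congr rfl fun q _ => this q, Finset.sum_ite_eq']
      simp [hdec]
    rw [this]; exact hu
  -- support of margX Q is in the decoder's range
  have hC1 : Nonempty C1 := ⟨eX hαβ.some.1 u⟩
  have hC2 : Nonempty C2 := ⟨eY hαβ.some.2 u⟩
  have hsub : (Finset.univ.filter fun p => 0 < margX Q p) ⊆
      Finset.univ.image (fun cc : C1 × C2 => g cc.1 cc.2 u) := by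
    intro a ha
    rw [Finset.mem_filter] at ha
    obtain ⟨p, hp⟩ : ∃ p : α × β, 0 < Q (a, p) := by
      by_contra h
      push_neg at h
      have : margX Q a ≤ 0 := Finset.sum_nonpos fun p _ => h p
      exact absurd ha.2 (not_lt.mpr this)
    have hap : a = dec p := by
      by_contra h
      rw [hQ] at hp; simp [h] at hp
    rw [Finset.mem_image]
    exact ⟨(eX p.1 u, eY p.2 u), Finset.mem_univ _, by rw [hap, hdec]⟩
  have hcard : (Finset.univ.filter fun p => 0 < margX Q p).card ≤
      Fintype.card C1 * Fintype.card C2 := by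
    calc (Finset.univ.filter fun p => 0 < margX Q p).card
        ≤ (Finset.univ.image (fun cc : C1 × C2 => g cc.1 cc.2 u)).card :=
          Finset.card_le_card hsub
      _ ≤ (Finset.univ : Finset (C1 × C2)).card := Finset.card_image_le
      _ = Fintype.card C1 * Fintype.card C2 := by
          rw [Finset.card_univ, Fintype.card_prod]
  have hc1pos : 0 < Fintype.card C1 := Fintype.card_pos
  have hc2pos : 0 < Fintype.card C2 := Fintype.card_pos
  -- bounding H0 (margX Q)
  have hH0le : H0 (margX Q) ≤
      Real.logb 2 (Fintype.card C1) + Real.logb 2 (Fintype.card C2) := by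
    unfold H0
    have hsplit : Real.logb 2 ((Fintype.card C1 : ℝ) * (Fintype.card C2 : ℝ))
        = Real.logb 2 (Fintype.card C1) + Real.logb 2 (Fintype.card C2) :=
      Real.logb_mul (by positivity) (by positivity)
    rw [← hsplit]
    rcases Nat.eq_zero_or_pos (Finset.univ.filter fun p => 0 < margX Q p).card with h0 | h0
    · rw [h0]
      simp only [Nat.cast_zero, Real.logb_zero]
      have h1 : (1 : ℝ) ≤ (Fintype.card C1 : ℝ) * (Fintype.card C2 : ℝ) := by
        have := Nat.one_le_iff_ne_zero.mpr (Nat.mul_ne_zero hc1pos.ne' hc2pos.ne')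
        exact_mod_cast this
      exact Real.logb_nonneg one_lt_two h1
    · refine Real.logb_le_logb_of_le one_lt_two (by exact_mod_cast h0) ?_
      exact_mod_cast hcard
  -- conclude via sInf
  have hmem : H0 (margX Q) ∈ { h | ∃ Q : (α × β) × (α × β) → ℝ, IsPMF Q ∧
      (∀ p, margY Q p = P p) ∧ prDiff Q ≤ ε ∧ h = H0 (margX Q) } :=
    ⟨Q, hQpmf, hQmargY, hpr, rfl⟩
  have hbdd : BddBelow { h | ∃ Q : (α × β) × (α × β) → ℝ, IsPMF Q ∧
      (∀ p, margY Q p = P p) ∧ prDiff Q ≤ ε ∧ h = H0 (margX Q) } := by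
    refine ⟨0, ?_⟩
    rintro h ⟨Q', -, -, -, rfl⟩
    unfold H0
    rcases Nat.eq_zero_or_pos (Finset.univ.filter fun p => 0 < margX Q' p).card with h0 | h0
    · rw [h0]; simp
    · exact Real.logb_nonneg one_lt_two (by exact_mod_cast h0)
  exact le_trans (csInf_le hbdd hmem) hH0le
end

section
/- One-shot Slepian–Wolf achievability error bound for the X-encoder confusion event: in the hashing protocol with two-universal hashes e_𝒳 into 𝒞_𝒳 and decoding restricted to pairs in a set 𝒜 ⊆ 𝒳 × 𝒴 satisfying |{x : (x,y) ∈ 𝒜}| ≤ 2^k for all y, the event E_1 = {∃ x′ ≠ X : e_𝒳(x′,U) = e_𝒳(X,U), (x′,Y) ∈ 𝒜} has probability Pr[E_1] ≤ 2^k / |𝒞_𝒳|. In particular, if log₂|𝒞_𝒳| ≥ k − log₂ ε_1 then Pr[E_1] ≤ ε_1. -/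
open Finset

attribute [local instance] Classical.propDecidable

/-- One-shot Slepian–Wolf achievability, error bound for the X-encoder confusion event:
with a two-universal hash `e𝒳` into `𝒞_𝒳` (seed `U` independent of `(X,Y)`), and a
decoding set `𝒜 ⊆ 𝒳 × 𝒴` all of whose `y`-slices have size at most `2^k`, the event
`E₁ = {∃ x' ≠ X : e𝒳(x',U) = e𝒳(X,U), (x',Y) ∈ 𝒜}` satisfies
`Pr[E₁] ≤ 2^k/|𝒞_𝒳|`; in particular `Pr[E₁] ≤ ε₁` whenever `log₂|𝒞_𝒳| ≥ k - log₂ ε₁`. -/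
theorem sw_hash_confusion_bound {α β υ C : Type*}
    [Fintype α] [Fintype β] [Fintype υ] [Fintype C]
    (P : α × β → ℝ) (hP : IsPMF P) (PU : υ → ℝ) (hPU : IsPMF PU)
    (eX : α → υ → C)
    (huniv : ∀ x x' : α, x ≠ x' →
      ∑ u, (if eX x u = eX x' u then PU u else 0) ≤ 1 / (Fintype.card C : ℝ))
    (𝒜 : Finset (α × β)) (k : ℝ)
    (hslice : ∀ y : β,
      ((Finset.univ.filter fun x => (x, y) ∈ 𝒜).card : ℝ) ≤ (2 : ℝ) ^ k)
    (ε₁ : ℝ) (hε₁ : 0 < ε₁) :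
    (∑ u, ∑ x, ∑ y,
        (if ∃ x', x' ≠ x ∧ eX x' u = eX x u ∧ (x', y) ∈ 𝒜
         then P (x, y) * PU u else 0))
      ≤ (2 : ℝ) ^ k / (Fintype.card C : ℝ) ∧
    (Real.logb 2 (Fintype.card C) ≥ k - Real.logb 2 ε₁ →
      (∑ u, ∑ x, ∑ y,
        (if ∃ x', x' ≠ x ∧ eX x' u = eX x u ∧ (x', y) ∈ 𝒜
         then P (x, y) * PU u else 0)) ≤ ε₁) := by
  obtain ⟨hP0, hP1⟩ := hP
  obtain ⟨hPU0, hPU1⟩ := hPU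
  -- nonemptiness
  have hαβ : Nonempty (α × β) := by
    by_contra h
    rw [not_nonempty_iff] at h
    simp [Finset.univ_eq_empty] at hP1
  have hυ : Nonempty υ := by
    by_contra h
    rw [not_nonempty_iff] at h
    simp [Finset.univ_eq_empty] at hPU1
  have hC : Nonempty C := ⟨eX hαβ.some.1 hυ.some⟩
  have hCpos : (0:ℝ) < (Fintype.card C : ℝ) := by
    exact_mod_cast Fintype.card_pos
  have h2k : (0:ℝ) < (2:ℝ) ^ k := Real.rpow_pos_of_pos (by norm_num) k
  have key : (∑ u, ∑ x, ∑ y,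
        (if ∃ x', x' ≠ x ∧ eX x' u = eX x u ∧ (x', y) ∈ 𝒜
         then P (x, y) * PU u else 0))
      ≤ (2 : ℝ) ^ k / (Fintype.card C : ℝ) := by
    have step1 : (∑ u, ∑ x, ∑ y,
        (if ∃ x', x' ≠ x ∧ eX x' u = eX x u ∧ (x', y) ∈ 𝒜
         then P (x, y) * PU u else 0))
        ≤ ∑ u, ∑ x, ∑ y : β, ∑ x' : α,
          (if x' ≠ x ∧ eX x' u = eX x u ∧ (x', y) ∈ 𝒜
           then P (x, y) * PU u else 0) := by
      refine Finset.sum_le_sum fun u _ => Finset.sum_le_sum fun x _ =>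
        Finset.sum_le_sum fun y _ => ?_
      by_cases h : ∃ x', x' ≠ x ∧ eX x' u = eX x u ∧ (x', y) ∈ 𝒜
      · rw [if_pos h]
        obtain ⟨x', hx'⟩ := h
        have hnn : ∀ i ∈ (Finset.univ : Finset α),
            0 ≤ (if i ≠ x ∧ eX i u = eX i u ∧ (i, y) ∈ 𝒜
              then P (x, y) * PU u else 0) := by
          intro i _
          split
          · exact mul_nonneg (hP0 _) (hPU0 _)
          · exact le_rfl
        have := Finset.single_le_sum
          (f := fun x' => if x' ≠ x ∧ eX x' u = eX x u ∧ (x', y) ∈ 𝒜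
            then P (x, y) * PU u else 0)
          (fun i _ => by
            show (0:ℝ) ≤ if i ≠ x ∧ eX i u = eX x u ∧ (i, y) ∈ 𝒜
              then P (x, y) * PU u else 0
            split
            · exact mul_nonneg (hP0 _) (hPU0 _)
            · exact le_rfl) (Finset.mem_univ x')
        simpa [if_pos hx'] using this
      · rw [if_neg h]
        refine Finset.sum_nonneg fun i _ => ?_
        split
        · exact mul_nonneg (hP0 _) (hPU0 _)
        · exact le_rfl
    have step2 : (∑ u, ∑ x, ∑ y : β, ∑ x' : α,
          (if x' ≠ x ∧ eX x' u = eX x u ∧ (x', y) ∈ 𝒜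
           then P (x, y) * PU u else 0))
        = ∑ x, ∑ y : β, ∑ x' : α, ∑ u,
          (if x' ≠ x ∧ eX x' u = eX x u ∧ (x', y) ∈ 𝒜
           then P (x, y) * PU u else 0) := by
      rw [Finset.sum_comm]
      refine Finset.sum_congr rfl fun x _ => ?_
      rw [Finset.sum_comm]
      refine Finset.sum_congr rfl fun y _ => ?_
      rw [Finset.sum_comm]
    have step3 : ∀ x y, (∑ x' : α, ∑ u,
          (if x' ≠ x ∧ eX x' u = eX x u ∧ (x', y) ∈ 𝒜
           then P (x, y) * PU u else 0))
        ≤ (2:ℝ) ^ k * (P (x, y) / (Fintype.card C : ℝ)) := by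
      intro x y
      have hb : ∀ x' : α, (∑ u,
          (if x' ≠ x ∧ eX x' u = eX x u ∧ (x', y) ∈ 𝒜
           then P (x, y) * PU u else 0))
          ≤ (if (x', y) ∈ 𝒜 then P (x, y) / (Fintype.card C : ℝ) else 0) := by
        intro x'
        by_cases hc : x' ≠ x ∧ (x', y) ∈ 𝒜
        · rw [if_pos hc.2]
          have : (∑ u, (if x' ≠ x ∧ eX x' u = eX x u ∧ (x', y) ∈ 𝒜
              then P (x, y) * PU u else 0))
              = P (x, y) * ∑ u, (if eX x' u = eX x u then PU u else 0) := by
            rw [Finset.mul_sum]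
            refine Finset.sum_congr rfl fun u _ => ?_
            by_cases he : eX x' u = eX x u <;> simp [he, hc.1, hc.2]
          rw [this, div_eq_mul_one_div]
          exact mul_le_mul_of_nonneg_left (huniv x' x hc.1) (hP0 _)
        · have hz : ∀ u : υ, (if x' ≠ x ∧ eX x' u = eX x u ∧ (x', y) ∈ 𝒜
              then P (x, y) * PU u else 0) = 0 := by
            intro u
            rw [if_neg]
            rintro ⟨h1, h2, h3⟩
            exact hc ⟨h1, h3⟩
          simp only [hz, Finset.sum_const_zero]
          split
          · exact div_nonneg (hP0 _) hCpos.le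
          · exact le_rfl
      calc (∑ x' : α, ∑ u,
          (if x' ≠ x ∧ eX x' u = eX x u ∧ (x', y) ∈ 𝒜
           then P (x, y) * PU u else 0))
          ≤ ∑ x' : α, (if (x', y) ∈ 𝒜 then P (x, y) / (Fintype.card C : ℝ) else 0) :=
            Finset.sum_le_sum fun x' _ => hb x'
        _ = ((Finset.univ.filter fun x' => (x', y) ∈ 𝒜).card : ℝ)
            * (P (x, y) / (Fintype.card C : ℝ)) := by
            rw [Finset.sum_ite, Finset.sum_const, Finset.sum_const_zero,
              add_zero, nsmul_eq_mul]
        _ ≤ (2:ℝ) ^ k * (P (x, y) / (Fintype.card C : ℝ)) := by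
            exact mul_le_mul_of_nonneg_right (hslice y)
              (div_nonneg (hP0 _) hCpos.le)
    calc (∑ u, ∑ x, ∑ y,
        (if ∃ x', x' ≠ x ∧ eX x' u = eX x u ∧ (x', y) ∈ 𝒜
         then P (x, y) * PU u else 0))
        ≤ ∑ x, ∑ y : β, ∑ x' : α, ∑ u,
          (if x' ≠ x ∧ eX x' u = eX x u ∧ (x', y) ∈ 𝒜
           then P (x, y) * PU u else 0) := step2 ▸ step1
      _ ≤ ∑ x, ∑ y : β, (2:ℝ) ^ k * (P (x, y) / (Fintype.card C : ℝ)) :=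
          Finset.sum_le_sum fun x _ => Finset.sum_le_sum fun y _ => step3 x y
      _ = (2:ℝ) ^ k / (Fintype.card C : ℝ) := by
          rw [← Finset.sum_product']
          simp_rw [div_eq_mul_one_div (P _), ← mul_assoc, mul_comm ((2:ℝ)^k)]
          rw [← Finset.sum_mul, ← Finset.sum_mul]
          have h1 : (∑ i ∈ Finset.univ ×ˢ Finset.univ, P (i.1, i.2)) = 1 := by
            simpa using hP1
          rw [h1]; ring
  refine ⟨key, fun hlog => ?_⟩
  have hclow : (2:ℝ) ^ k / ε₁ ≤ (Fintype.card C : ℝ) := by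
    have := Real.rpow_le_rpow_left_iff (x := (2:ℝ)) (by norm_num)
      |>.mpr hlog
    rwa [Real.rpow_logb (by norm_num) (by norm_num) hCpos,
      Real.rpow_sub (by norm_num),
      Real.rpow_logb (by norm_num) (by norm_num) hε₁] at this
  refine key.trans ?_
  rw [div_le_iff₀ hCpos]
  calc (2:ℝ) ^ k = ε₁ * ((2:ℝ) ^ k / ε₁) := by field_simp
    _ ≤ ε₁ * (Fintype.card C : ℝ) := by
        exact mul_le_mul_of_nonneg_left hclow hε₁.le
end

section
/- Random-coding MAC achievability: with 2^{C₁} codewords X(m₁) i.i.d. ~ P_X, 2^{C₂} codewords Y(m₂) i.i.d. ~ P_Y, decoding by unique joint membership in a set 𝒜 ⊆ 𝒳×𝒴×𝒵, the average probability of error is at most Pr[(X(m₁),Y(m₂),Z) ∉ 𝒜] + 2^{C₁}·2^{−(a₁+b₁−d)} + 2^{C₂}·2^{−(a₂+b₂−d)} + 2^{C₁+C₂}·2^{−(a₁+a₂+c−d)}, where the exponents bound the probabilities of the three confusion events as in the pairwise lemmas. -/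
open Finset

attribute [local instance] Classical.propDecidable

/-!
An error needs either the true triple `(X(m₁), Y(m₂), Z)` to lie outside `𝒜` or some wrong pair
`(n₁, n₂)` to give a triple in `𝒜`; the union bound reduces the error probability to the
probabilities of these events. Since the codewords are independent, the triple
`(X(n₁), Y(n₂), Z)` has law `P_X ⊗ P_{YZ}`, `P_Y ⊗ P_{XZ}` or `P_X ⊗ P_Y ⊗ P_Z` according as
only `n₁`, only `n₂`, or both differ from the sent messages. On `𝒜` these laws are at most
`2^{-(a₁+b₁)}`, `2^{-(a₂+b₂)}` and `2^{-(a₁+a₂+c)}`, so each event has probability at most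
`2^d` times that, and there are at most `2^{C₁}`, `2^{C₂}` and `2^{C₁+C₂}` wrong pairs of each kind.
-/

/-- The joint law of `(f j, f k)` when the coordinates of `f : ι → A` are i.i.d. with law `P`. -/
def pairLaw {ι A : Type*} [DecidableEq ι] [DecidableEq A] (P : A → ℝ) (j k : ι) (a b : A) : ℝ :=
  if j = k then (if a = b then P a else 0) else P a * P b

theorem mul_le_two_rpow_neg_add {u v a b : ℝ} (hu : u ≤ 2 ^ (-a)) (hv₀ : 0 ≤ v)
    (hv : v ≤ 2 ^ (-b)) : u * v ≤ 2 ^ (-(a + b)) := by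
  rw [neg_add, Real.rpow_add two_pos]
  exact mul_le_mul hu hv hv₀ (Real.rpow_nonneg zero_le_two _)

theorem sum_le_mul_of_le_of_card_le {ι : Type*} {s : Finset ι} {f : ι → ℝ} {B N : ℝ}
    (hB : 0 ≤ B) (hf : ∀ i ∈ s, f i ≤ B) (hs : (#s : ℝ) ≤ N) : ∑ i ∈ s, f i ≤ N * B :=
  calc ∑ i ∈ s, f i ≤ #s * B := by simpa using sum_le_card_nsmul s f B hf
    _ ≤ N * B := by gcongr

section IidVector

variable {ι A : Type*} [Fintype ι] [DecidableEq ι] [Fintype A] {P : A → ℝ}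

theorem sum_pi_prod_eq_one (hP : ∑ a, P a = 1) : ∑ f : ι → A, ∏ i, P (f i) = 1 := by
  rw [← Fintype.prod_sum (fun (_ : ι) a => P a), hP, prod_const_one]

theorem sum_pi_prod_mul_eq_sum_mul_sum_subtype_ne (j : ι) (G : (ι → A) → ℝ) :
    ∑ f : ι → A, (∏ i, P (f i)) * G f =
      ∑ a, P a * ∑ f : {i // i ≠ j} → A,
        (∏ i, P (f i)) * G ((Equiv.piSplitAt j fun _ => A).symm (a, f)) := by
  rw [← (Equiv.piSplitAt j fun _ => A).symm.sum_comp, Fintype.sum_prod_type]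
  refine sum_congr rfl fun a _ => ?_
  rw [mul_sum]
  refine sum_congr rfl fun f _ => ?_
  have hrest : ∀ i : {i // i ≠ j}, (Equiv.piSplitAt j fun _ => A).symm (a, f) i = f i :=
    fun i => by simp [Equiv.piSplitAt_symm_apply, i.2]
  rw [Fintype.prod_eq_mul_prod_subtype_ne _ j]
  simp [hrest, mul_assoc]

theorem sum_pi_prod_mul_apply (hP : ∑ a, P a = 1) (j : ι) (g : A → ℝ) :
    ∑ f : ι → A, (∏ i, P (f i)) * g (f j) = ∑ a, P a * g a := by
  rw [sum_pi_prod_mul_eq_sum_mul_sum_subtype_ne j]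
  simp [Equiv.piSplitAt_symm_apply, ← sum_mul, sum_pi_prod_eq_one hP]

theorem sum_pi_prod_mul_apply_apply_of_ne (hP : ∑ a, P a = 1) {j k : ι} (hjk : j ≠ k)
    (G : A → A → ℝ) :
    ∑ f : ι → A, (∏ i, P (f i)) * G (f j) (f k) = ∑ a, ∑ b, P a * P b * G a b := by
  rw [sum_pi_prod_mul_eq_sum_mul_sum_subtype_ne j]
  refine sum_congr rfl fun a _ => ?_
  simp only [Equiv.piSplitAt_symm_apply, dif_pos, dif_neg hjk.symm]
  simp [sum_pi_prod_mul_apply hP (⟨k, hjk.symm⟩ : {i // i ≠ j}) (G a), mul_sum, mul_assoc]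

theorem sum_pi_prod_mul_apply_apply [DecidableEq A] (hP : ∑ a, P a = 1) (j k : ι)
    (G : A → A → ℝ) :
    ∑ f : ι → A, (∏ i, P (f i)) * G (f j) (f k) = ∑ a, ∑ b, pairLaw P j k a b * G a b := by
  unfold pairLaw
  split_ifs with hjk
  · subst hjk
    simp [ite_mul, sum_pi_prod_mul_apply hP j fun a => G a a]
  · simp [sum_pi_prod_mul_apply_apply_of_ne hP hjk]

end IidVector

section ConfusionLaw

variable {α β γ ι₁ ι₂ : Type*} [Fintype α] [Fintype β] [DecidableEq α] [DecidableEq β]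
  [DecidableEq ι₁] [DecidableEq ι₂] {PX : α → ℝ} {PY : β → ℝ} {W : α → β → γ → ℝ}
  {m₁ n₁ : ι₁} {m₂ n₂ : ι₂}

/-- The joint law of `(X(n₁), Y(n₂), Z)` when `(m₁, m₂)` is sent. -/
def confusionLaw (PX : α → ℝ) (PY : β → ℝ) (W : α → β → γ → ℝ) (m₁ n₁ : ι₁) (m₂ n₂ : ι₂)
    (q : α × β × γ) : ℝ :=
  ∑ x, ∑ y, pairLaw PX m₁ n₁ x q.1 * pairLaw PY m₂ n₂ y q.2.1 * W x y q.2.2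

theorem confusionLaw_of_ne_of_eq (h₁ : n₁ ≠ m₁) (q : α × β × γ) :
    confusionLaw PX PY W m₁ n₁ m₂ m₂ q = PX q.1 * ∑ x, PX x * PY q.2.1 * W x q.2.1 q.2.2 := by
  simp only [confusionLaw, pairLaw, h₁.symm, ↓reduceIte, mul_ite, mul_zero, ite_mul, zero_mul,
    sum_ite_eq', mem_univ, mul_sum]
  exact sum_congr rfl fun x _ => by ring

theorem confusionLaw_of_eq_of_ne (h₂ : n₂ ≠ m₂) (q : α × β × γ) :
    confusionLaw PX PY W m₁ m₁ m₂ n₂ q = PY q.2.1 * ∑ y, PX q.1 * PY y * W q.1 y q.2.2 := by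
  simp only [confusionLaw, pairLaw, ↓reduceIte, h₂.symm, ite_mul, zero_mul, sum_ite_irrel,
    sum_const_zero, sum_ite_eq', mem_univ, mul_sum]
  exact sum_congr rfl fun y _ => by ring

theorem confusionLaw_of_ne_of_ne (h₁ : n₁ ≠ m₁) (h₂ : n₂ ≠ m₂) (q : α × β × γ) :
    confusionLaw PX PY W m₁ n₁ m₂ n₂ q =
      PX q.1 * PY q.2.1 * ∑ x, ∑ y, PX x * PY y * W x y q.2.2 := by
  simp only [confusionLaw, pairLaw, h₁.symm, ↓reduceIte, h₂.symm, mul_sum]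
  exact sum_congr rfl fun x _ => sum_congr rfl fun y _ => by ring

end ConfusionLaw

section CodebookAverage

variable {α β γ ι₁ ι₂ : Type*} [Fintype α] [Fintype β] [Fintype γ]
  [Fintype ι₁] [Fintype ι₂] [DecidableEq ι₁] [DecidableEq ι₂]

def codebookAverage (PX : α → ℝ) (PY : β → ℝ) (W : α → β → γ → ℝ) (m₁ : ι₁) (m₂ : ι₂)
    (F : (ι₁ → α) → (ι₂ → β) → γ → ℝ) : ℝ :=
  ∑ cb1 : ι₁ → α, ∑ cb2 : ι₂ → β, ∑ z : γ,
    (∏ i, PX (cb1 i)) * (∏ j, PY (cb2 j)) * W (cb1 m₁) (cb2 m₂) z * F cb1 cb2 z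

variable {PX : α → ℝ} {PY : β → ℝ} {W : α → β → γ → ℝ} {m₁ : ι₁} {m₂ : ι₂}

theorem codebookAverage_mono (hPX : ∀ x, 0 ≤ PX x) (hPY : ∀ y, 0 ≤ PY y)
    (hW : ∀ x y z, 0 ≤ W x y z) {F G : (ι₁ → α) → (ι₂ → β) → γ → ℝ}
    (hFG : ∀ cb1 cb2 z, F cb1 cb2 z ≤ G cb1 cb2 z) :
    codebookAverage PX PY W m₁ m₂ F ≤ codebookAverage PX PY W m₁ m₂ G := by
  unfold codebookAverage
  gcongr with cb1 _ cb2 _ z _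
  · exact mul_nonneg (mul_nonneg (prod_nonneg fun i _ => hPX _) (prod_nonneg fun j _ => hPY _))
      (hW _ _ _)
  · exact hFG cb1 cb2 z

theorem codebookAverage_add (F G : (ι₁ → α) → (ι₂ → β) → γ → ℝ) :
    codebookAverage PX PY W m₁ m₂ (fun cb1 cb2 z => F cb1 cb2 z + G cb1 cb2 z) =
      codebookAverage PX PY W m₁ m₂ F + codebookAverage PX PY W m₁ m₂ G := by
  simp only [codebookAverage, mul_add, sum_add_distrib]

theorem codebookAverage_sum {κ : Type*} (s : Finset κ)
    (F : κ → (ι₁ → α) → (ι₂ → β) → γ → ℝ) :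
    codebookAverage PX PY W m₁ m₂ (fun cb1 cb2 z => ∑ n ∈ s, F n cb1 cb2 z) =
      ∑ n ∈ s, codebookAverage PX PY W m₁ m₂ (F n) := by
  classical
  induction s using Finset.induction_on with
  | empty => simp [codebookAverage]
  | insert n s hn ih => simp only [sum_insert hn, codebookAverage_add, ih]

variable [DecidableEq α] [DecidableEq β]

theorem codebookAverage_eq_sum_confusionLaw (hPX : ∑ x, PX x = 1) (hPY : ∑ y, PY y = 1)
    (n₁ : ι₁) (n₂ : ι₂) (H : α × β × γ → ℝ) :
    codebookAverage PX PY W m₁ m₂ (fun cb1 cb2 z => H (cb1 n₁, cb2 n₂, z)) =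
      ∑ q, confusionLaw PX PY W m₁ n₁ m₂ n₂ q * H q := by
  have hfactor : ∀ (cb1 : ι₁ → α) (cb2 : ι₂ → β),
      ∑ z, (∏ i, PX (cb1 i)) * (∏ j, PY (cb2 j)) * W (cb1 m₁) (cb2 m₂) z * H (cb1 n₁, cb2 n₂, z)
        = (∏ i, PX (cb1 i)) * ((∏ j, PY (cb2 j)) *
            ∑ z, W (cb1 m₁) (cb2 m₂) z * H (cb1 n₁, cb2 n₂, z)) := by
    intro cb1 cb2
    simp only [mul_sum, mul_assoc]
  have hY : ∀ x x', ∑ cb2 : ι₂ → β, (∏ j, PY (cb2 j)) * ∑ z, W x (cb2 m₂) z * H (x', cb2 n₂, z)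
      = ∑ y, ∑ y', pairLaw PY m₂ n₂ y y' * ∑ z, W x y z * H (x', y', z) := fun x x' =>
    sum_pi_prod_mul_apply_apply hPY m₂ n₂ fun y y' => ∑ z, W x y z * H (x', y', z)
  simp only [codebookAverage, hfactor, ← mul_sum]
  rw [sum_pi_prod_mul_apply_apply hPX m₁ n₁
    (fun x x' => ∑ cb2 : ι₂ → β, (∏ j, PY (cb2 j)) * ∑ z, W x (cb2 m₂) z * H (x', cb2 n₂, z))]
  simp only [hY]
  simp only [confusionLaw, Fintype.sum_prod_type, mul_sum, sum_mul]
  rw [sum_comm]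
  refine sum_congr rfl fun x' _ => ?_
  rw [sum_comm_cycle]
  refine sum_congr rfl fun y' _ => ?_
  rw [sum_comm_cycle]
  exact sum_congr rfl fun z _ => sum_congr rfl fun x _ => sum_congr rfl fun y _ => by ring

variable [DecidableEq γ] {𝒜 : Finset (α × β × γ)}

theorem sum_codebookAverage_mem_le (hPX : ∑ x, PX x = 1) (hPY : ∑ y, PY y = 1) {e d N : ℝ}
    (s : Finset (ι₁ × ι₂))
    (hconf : ∀ p ∈ s, ∀ q ∈ 𝒜, confusionLaw PX PY W m₁ p.1 m₂ p.2 q ≤ 2 ^ (-e))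
    (hcard : (#𝒜 : ℝ) ≤ 2 ^ d) (hs : (#s : ℝ) ≤ N) :
    ∑ p ∈ s, codebookAverage PX PY W m₁ m₂
        (fun cb1 cb2 z => if (cb1 p.1, cb2 p.2, z) ∈ 𝒜 then 1 else 0) ≤
      N * 2 ^ (-(e - d)) := by
  refine sum_le_mul_of_le_of_card_le (Real.rpow_nonneg zero_le_two _) (fun p hp => ?_) hs
  rw [codebookAverage_eq_sum_confusionLaw hPX hPY p.1 p.2 fun q => if q ∈ 𝒜 then 1 else 0]
  simp only [mul_ite, mul_one, mul_zero, sum_ite_mem, univ_inter]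
  calc ∑ q ∈ 𝒜, confusionLaw PX PY W m₁ p.1 m₂ p.2 q ≤ 2 ^ d * 2 ^ (-e) :=
        sum_le_mul_of_le_of_card_le (Real.rpow_nonneg zero_le_two _) (hconf p hp) hcard
    _ = 2 ^ (-(e - d)) := by rw [← Real.rpow_add two_pos]; ring_nf

theorem sum_codebookAverage_wrong_fst_le (hPX : IsPMF PX) (hPY : IsPMF PY)
    (hW : ∀ x y, IsPMF (W x y)) {a b d : ℝ} (ha : ∀ q ∈ 𝒜, PX q.1 ≤ 2 ^ (-a))
    (hb : ∀ q ∈ 𝒜, ∑ x, PX x * PY q.2.1 * W x q.2.1 q.2.2 ≤ 2 ^ (-b))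
    (hcard : (#𝒜 : ℝ) ≤ 2 ^ d) :
    ∑ p ∈ (univ.erase m₁) ×ˢ {m₂}, codebookAverage PX PY W m₁ m₂
        (fun cb1 cb2 z => if (cb1 p.1, cb2 p.2, z) ∈ 𝒜 then 1 else 0) ≤
      Fintype.card ι₁ * 2 ^ (-(a + b - d)) := by
  refine sum_codebookAverage_mem_le hPX.2 hPY.2 _ ?_ hcard (by simp)
  rintro ⟨n₁, n₂⟩ hp q hq
  simp only [mem_product, mem_erase, mem_singleton, mem_univ, and_true] at hp
  obtain ⟨h₁, rfl⟩ := hp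
  rw [confusionLaw_of_ne_of_eq h₁]
  exact mul_le_two_rpow_neg_add (ha q hq)
    (sum_nonneg fun x _ => mul_nonneg (mul_nonneg (hPX.1 x) (hPY.1 _)) ((hW x _).1 _)) (hb q hq)

theorem sum_codebookAverage_wrong_snd_le (hPX : IsPMF PX) (hPY : IsPMF PY)
    (hW : ∀ x y, IsPMF (W x y)) {a b d : ℝ} (ha : ∀ q ∈ 𝒜, PY q.2.1 ≤ 2 ^ (-a))
    (hb : ∀ q ∈ 𝒜, ∑ y, PX q.1 * PY y * W q.1 y q.2.2 ≤ 2 ^ (-b))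
    (hcard : (#𝒜 : ℝ) ≤ 2 ^ d) :
    ∑ p ∈ {m₁} ×ˢ (univ.erase m₂), codebookAverage PX PY W m₁ m₂
        (fun cb1 cb2 z => if (cb1 p.1, cb2 p.2, z) ∈ 𝒜 then 1 else 0) ≤
      Fintype.card ι₂ * 2 ^ (-(a + b - d)) := by
  refine sum_codebookAverage_mem_le hPX.2 hPY.2 _ ?_ hcard (by simp)
  rintro ⟨n₁, n₂⟩ hp q hq
  simp only [mem_product, mem_erase, mem_singleton, mem_univ, and_true] at hp
  obtain ⟨rfl, h₂⟩ := hp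
  rw [confusionLaw_of_eq_of_ne h₂]
  exact mul_le_two_rpow_neg_add (ha q hq)
    (sum_nonneg fun y _ => mul_nonneg (mul_nonneg (hPX.1 _) (hPY.1 y)) ((hW _ y).1 _)) (hb q hq)

theorem sum_codebookAverage_wrong_both_le (hPX : IsPMF PX) (hPY : IsPMF PY)
    (hW : ∀ x y, IsPMF (W x y)) {a₁ a₂ c d : ℝ} (ha₁ : ∀ q ∈ 𝒜, PX q.1 ≤ 2 ^ (-a₁))
    (ha₂ : ∀ q ∈ 𝒜, PY q.2.1 ≤ 2 ^ (-a₂))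
    (hc : ∀ q ∈ 𝒜, ∑ x, ∑ y, PX x * PY y * W x y q.2.2 ≤ 2 ^ (-c))
    (hcard : (#𝒜 : ℝ) ≤ 2 ^ d) :
    ∑ p ∈ (univ.erase m₁) ×ˢ (univ.erase m₂), codebookAverage PX PY W m₁ m₂
        (fun cb1 cb2 z => if (cb1 p.1, cb2 p.2, z) ∈ 𝒜 then 1 else 0) ≤
      (Fintype.card ι₁ * Fintype.card ι₂ : ℕ) * 2 ^ (-(a₁ + a₂ + c - d)) := by
  refine sum_codebookAverage_mem_le hPX.2 hPY.2 _ ?_ hcard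
    (by exact_mod_cast (card_le_univ _).trans_eq (Fintype.card_prod _ _))
  rintro ⟨n₁, n₂⟩ hp q hq
  simp only [mem_product, mem_erase, mem_univ, and_true] at hp
  rw [confusionLaw_of_ne_of_ne hp.1 hp.2]
  refine mul_le_two_rpow_neg_add (mul_le_two_rpow_neg_add (ha₁ q hq) (hPY.1 _) (ha₂ q hq)) ?_
    (hc q hq)
  exact sum_nonneg fun x _ => sum_nonneg fun y _ =>
    mul_nonneg (mul_nonneg (hPX.1 x) (hPY.1 y)) ((hW x y).1 _)

end CodebookAverage

/-- The decidability instance is a parameter so that the lemma matches the one elaborated for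
`Fin n` (`Nat.decidableExistsFin`). -/
theorem ite_error_le {α β γ ι₁ ι₂ : Type*} [Fintype ι₁] [Fintype ι₂] [DecidableEq ι₁]
    [DecidableEq ι₂] [DecidableEq α] [DecidableEq β] [DecidableEq γ] {𝒜 : Finset (α × β × γ)}
    {m₁ : ι₁} {m₂ : ι₂} (cb1 : ι₁ → α) (cb2 : ι₂ → β) (z : γ)
    [Decidable (∃ m₁' m₂', (m₁', m₂') ≠ (m₁, m₂) ∧ (cb1 m₁', cb2 m₂', z) ∈ 𝒜)] :
    (if (cb1 m₁, cb2 m₂, z) ∉ 𝒜 ∨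
        ∃ m₁' m₂', (m₁', m₂') ≠ (m₁, m₂) ∧ (cb1 m₁', cb2 m₂', z) ∈ 𝒜 then (1 : ℝ) else 0) ≤
      (if (cb1 m₁, cb2 m₂, z) ∉ 𝒜 then 1 else 0)
        + ∑ p ∈ (univ.erase m₁) ×ˢ {m₂}, (if (cb1 p.1, cb2 p.2, z) ∈ 𝒜 then 1 else 0)
        + ∑ p ∈ {m₁} ×ˢ (univ.erase m₂), (if (cb1 p.1, cb2 p.2, z) ∈ 𝒜 then 1 else 0)
        + ∑ p ∈ (univ.erase m₁) ×ˢ (univ.erase m₂),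
            (if (cb1 p.1, cb2 p.2, z) ∈ 𝒜 then 1 else 0) := by
  set ind : ι₁ × ι₂ → ℝ := fun p => if (cb1 p.1, cb2 p.2, z) ∈ 𝒜 then 1 else 0
  have hind : ∀ p, 0 ≤ ind p := fun p => by positivity
  have hone : ∀ {s} (p : ι₁ × ι₂), p ∈ s → (cb1 p.1, cb2 p.2, z) ∈ 𝒜 → 1 ≤ ∑ p ∈ s, ind p :=
    fun p hp hmem => by simpa [ind, hmem] using single_le_sum (fun p _ => hind p) hp
  have h₁ := sum_nonneg fun p (_ : p ∈ (univ.erase m₁) ×ˢ {m₂}) => hind p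
  have h₂ := sum_nonneg fun p (_ : p ∈ {m₁} ×ˢ (univ.erase m₂)) => hind p
  have h₃ := sum_nonneg fun p (_ : p ∈ (univ.erase m₁) ×ˢ (univ.erase m₂)) => hind p
  by_cases hin : (cb1 m₁, cb2 m₂, z) ∈ 𝒜
  · rw [if_neg (not_not_intro hin)]
    split_ifs with herr
    · obtain ⟨n₁, n₂, hne, hmem⟩ := herr.resolve_left (not_not_intro hin)
      by_cases hn₁ : n₁ = m₁ <;> by_cases hn₂ : n₂ = m₂
      · simp_all
      · linarith [hone (s := {m₁} ×ˢ (univ.erase m₂)) (n₁, n₂) (by simp [hn₁, hn₂]) hmem]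
      · linarith [hone (s := (univ.erase m₁) ×ˢ {m₂}) (n₁, n₂) (by simp [hn₁, hn₂]) hmem]
      · linarith [hone (s := (univ.erase m₁) ×ˢ (univ.erase m₂)) (n₁, n₂) (by simp [hn₁, hn₂])
          hmem]
    · linarith
  · rw [if_pos hin, if_pos (Or.inl hin)]
    linarith

/-- Random-coding MAC achievability. Codebooks: `2^C₁` codewords `X(m₁)` i.i.d. `~ P_X`
and `2^C₂` codewords `Y(m₂)` i.i.d. `~ P_Y`; the channel output `Z ~ P_{Z|XY}(·|X(m₁),Y(m₂))`
when the (fixed, by symmetry) message pair `(m₁,m₂)` is sent; the decoder looks for a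
unique pair `(m₁',m₂')` with `(X(m₁'),Y(m₂'),z) ∈ 𝒜`, so an error occurs iff the true
triple is outside `𝒜` or some wrong pair's triple lies in `𝒜`. If every `(x,y,z) ∈ 𝒜`
satisfies `P_X(x) ≤ 2^{-a₁}`, `P_Y(y) ≤ 2^{-a₂}`, `P_Z(z) ≤ 2^{-c}`,
`P_{YZ}(y,z) ≤ 2^{-b₁}`, `P_{XZ}(x,z) ≤ 2^{-b₂}` and `|𝒜| ≤ 2^d`, then the average
probability of error is at most
`Pr[(X(m₁),Y(m₂),Z) ∉ 𝒜] + 2^C₁ 2^{-(a₁+b₁-d)} + 2^C₂ 2^{-(a₂+b₂-d)} + 2^{C₁+C₂} 2^{-(a₁+a₂+c-d)}`. -/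
theorem mac_random_coding_achievability {α β γ : Type*}
    [Fintype α] [Fintype β] [Fintype γ]
    [DecidableEq α] [DecidableEq β] [DecidableEq γ]
    (PX : α → ℝ) (hPX : IsPMF PX) (PY : β → ℝ) (hPY : IsPMF PY)
    (W : α → β → γ → ℝ) (hW : ∀ x y, IsPMF (W x y))
    (C₁ C₂ : ℕ) (m₁ : Fin (2 ^ C₁)) (m₂ : Fin (2 ^ C₂))
    (𝒜 : Finset (α × β × γ)) (a₁ a₂ b₁ b₂ c d : ℝ)
    (h𝒜 : ∀ p ∈ 𝒜,
      PX p.1 ≤ (2 : ℝ) ^ (-a₁) ∧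
      PY p.2.1 ≤ (2 : ℝ) ^ (-a₂) ∧
      (∑ x, ∑ y, PX x * PY y * W x y p.2.2) ≤ (2 : ℝ) ^ (-c) ∧
      (∑ x, PX x * PY p.2.1 * W x p.2.1 p.2.2) ≤ (2 : ℝ) ^ (-b₁) ∧
      (∑ y, PX p.1 * PY y * W p.1 y p.2.2) ≤ (2 : ℝ) ^ (-b₂))
    (hcard : (𝒜.card : ℝ) ≤ (2 : ℝ) ^ d) :
    (∑ cb1 : Fin (2 ^ C₁) → α, ∑ cb2 : Fin (2 ^ C₂) → β, ∑ z : γ,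
      (∏ i, PX (cb1 i)) * (∏ j, PY (cb2 j)) * W (cb1 m₁) (cb2 m₂) z *
      (if (cb1 m₁, cb2 m₂, z) ∉ 𝒜 ∨
          ∃ m₁' m₂', (m₁', m₂') ≠ (m₁, m₂) ∧ (cb1 m₁', cb2 m₂', z) ∈ 𝒜
       then 1 else 0))
    ≤ (∑ cb1 : Fin (2 ^ C₁) → α, ∑ cb2 : Fin (2 ^ C₂) → β, ∑ z : γ,
        (∏ i, PX (cb1 i)) * (∏ j, PY (cb2 j)) * W (cb1 m₁) (cb2 m₂) z *
        (if (cb1 m₁, cb2 m₂, z) ∉ 𝒜 then 1 else 0))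
      + (2 : ℝ) ^ C₁ * (2 : ℝ) ^ (-(a₁ + b₁ - d))
      + (2 : ℝ) ^ C₂ * (2 : ℝ) ^ (-(a₂ + b₂ - d))
      + (2 : ℝ) ^ (C₁ + C₂) * (2 : ℝ) ^ (-(a₁ + a₂ + c - d)) := by
  have hW₀ : ∀ x y z, 0 ≤ W x y z := fun x y z => (hW x y).1 z
  refine (codebookAverage_mono hPX.1 hPY.1 hW₀ fun cb1 cb2 z => ite_error_le cb1 cb2 z).trans ?_
  simp only [codebookAverage_add, codebookAverage_sum]
  refine add_le_add (add_le_add (add_le_add le_rfl ?_) ?_) ?_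
  · refine (sum_codebookAverage_wrong_fst_le (m₁ := m₁) (m₂ := m₂) hPX hPY hW
      (fun q hq => (h𝒜 q hq).1) (fun q hq => (h𝒜 q hq).2.2.2.1) hcard).trans_eq ?_
    simp
  · refine (sum_codebookAverage_wrong_snd_le (m₁ := m₁) (m₂ := m₂) hPX hPY hW
      (fun q hq => (h𝒜 q hq).2.1) (fun q hq => (h𝒜 q hq).2.2.2.2) hcard).trans_eq ?_
    simp
  · refine (sum_codebookAverage_wrong_both_le (m₁ := m₁) (m₂ := m₂) hPX hPY hW
      (fun q hq => (h𝒜 q hq).1) (fun q hq => (h𝒜 q hq).2.1) (fun q hq => (h𝒜 q hq).2.2.1)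
      hcard).trans_eq ?_
    simp [pow_add]
end

section
/- Smoothed H_0 asymptotic (AEP for H_0): for i.i.d. X_1,…,X_n with finite alphabet, lim_{ε→0} lim_{n→∞} H_0^ε(X_1^n)/n = H(X_1). -/
open Finset

/-- Rényi entropy of order `-∞`: `-log₂ min_{a : P(a) > 0} P(a)`. -/
noncomputable def Hminf {α : Type*} [Fintype α] (P : α → ℝ) : ℝ :=
  - Real.logb 2 (sInf (P '' {a | 0 < P a}))

/-- `ε`-smooth Rényi entropy of order 0: the infimum of `H₀(X̄)` over random variables `X̄`
jointly distributed with `X` (first coordinate `X̄`, second coordinate `X ~ P`)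
such that `Pr[X̄ ≠ X] ≤ ε`. -/
noncomputable def H0eps {α : Type*} [Fintype α] [DecidableEq α] (P : α → ℝ) (ε : ℝ) : ℝ :=
  sInf { h | ∃ Q : α × α → ℝ, IsPMF Q ∧ (∀ a, margY Q a = P a) ∧
    prDiff Q ≤ ε ∧ h = H0 (margX Q) }

/-- `ε`-smooth Rényi entropy of order `-∞`: the supremum of `H₋∞(X̄)` over random
variables `X̄` jointly distributed with `X` such that `Pr[X̄ ≠ X] ≤ ε`. -/
noncomputable def HminfEps {α : Type*} [Fintype α] [DecidableEq α] (P : α → ℝ) (ε : ℝ) : ℝ :=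
  sSup { h | ∃ Q : α × α → ℝ, IsPMF Q ∧ (∀ a, margY Q a = P a) ∧
    prDiff Q ≤ ε ∧ h = Hminf (margX Q) }

/-- The pmf of `n` i.i.d. copies of `X ~ P`. -/
noncomputable def prodPMF {α : Type*} [Fintype α] (P : α → ℝ) (n : ℕ) :
    (Fin n → α) → ℝ :=
  fun x => ∏ i, P (x i)

/-- Shannon entropy (base 2). -/
noncomputable def Hsh {α : Type*} [Fintype α] (P : α → ℝ) : ℝ :=
  - ∑ a, P a * Real.logb 2 (P a)

/- ======================= auxiliary lemmas ======================= -/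
section auxhelp
variable {α : Type*} [Fintype α]

lemma H0_nonneg (q : α → ℝ) : 0 ≤ H0 q := by
  unfold H0
  rcases Nat.eq_zero_or_pos (Finset.univ.filter fun a => 0 < q a).card with h | h
  · simp [h]
  · exact Real.logb_nonneg one_lt_two (by exact_mod_cast h)

lemma sum_pi_prod {n : ℕ} (G : Fin n → α → ℝ) :
    ∑ x : Fin n → α, ∏ i, G i (x i) = ∏ i, ∑ a, G i a := by
  rw [Finset.prod_univ_sum, Fintype.piFinset_univ]

lemma prodPMF_nonneg {P : α → ℝ} (h0 : ∀ a, 0 ≤ P a) {n : ℕ} (x : Fin n → α) :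
    0 ≤ prodPMF P n x :=
  Finset.prod_nonneg fun i _ => h0 (x i)

lemma prodPMF_sum {P : α → ℝ} (h1 : ∑ a, P a = 1) (n : ℕ) :
    ∑ x : Fin n → α, prodPMF P n x = 1 := by
  have := sum_pi_prod (n := n) (fun _ a => (P a : ℝ))
  unfold prodPMF
  rw [this]
  simp [h1]

lemma exp_single {P : α → ℝ} (h1 : ∑ a, P a = 1) {n : ℕ} (i : Fin n) (F : α → ℝ) :
    ∑ x : Fin n → α, prodPMF P n x * F (x i) = ∑ a, P a * F a := by
  have key : ∀ x : Fin n → α, prodPMF P n x * F (x i)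
      = ∏ m, (P (x m) * (if m = i then F (x m) else 1)) := by
    intro x
    rw [Finset.prod_mul_distrib, Finset.prod_ite_eq' Finset.univ i (fun m => F (x m))]
    simp [prodPMF]
  have e1 : (∑ x : Fin n → α, prodPMF P n x * F (x i))
      = ∑ x : Fin n → α, ∏ m, (P (x m) * (if m = i then F (x m) else 1)) :=
    Finset.sum_congr rfl fun x _ => key x
  have e2 := sum_pi_prod (fun m a => P a * (if m = i then F a else 1))
  rw [e1, e2]
  have e3 : ∀ m : Fin n, ∑ a, P a * (if m = i then F a else 1)
      = if m = i then ∑ a, P a * F a else 1 := by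
    intro m
    by_cases hm : m = i <;> simp [hm, h1]
  rw [Finset.prod_congr rfl fun m _ => e3 m,
    Finset.prod_ite_eq' Finset.univ i (fun _ => ∑ a, P a * F a)]
  simp

lemma exp_pair {P : α → ℝ} (h1 : ∑ a, P a = 1) {n : ℕ} {i j : Fin n} (hij : i ≠ j)
    (F K : α → ℝ) :
    ∑ x : Fin n → α, prodPMF P n x * (F (x i) * K (x j))
      = (∑ a, P a * F a) * (∑ a, P a * K a) := by
  have key : ∀ x : Fin n → α, prodPMF P n x * (F (x i) * K (x j))
      = ∏ m, (P (x m) * (if m = i then F (x m) else 1) * (if m = j then K (x m) else 1)) := by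
    intro x
    rw [Finset.prod_mul_distrib, Finset.prod_mul_distrib,
      Finset.prod_ite_eq' Finset.univ i (fun m => F (x m)),
      Finset.prod_ite_eq' Finset.univ j (fun m => K (x m))]
    simp [prodPMF, mul_assoc]
  have e1 : (∑ x : Fin n → α, prodPMF P n x * (F (x i) * K (x j)))
      = ∑ x : Fin n → α, ∏ m, (P (x m) * (if m = i then F (x m) else 1) * (if m = j then K (x m) else 1)) :=
    Finset.sum_congr rfl fun x _ => key x
  have e2 := sum_pi_prod (fun m a => P a * (if m = i then F a else 1) * (if m = j then K a else 1))
  rw [e1, e2]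
  have e3 : ∀ m : Fin n, ∑ a, P a * (if m = i then F a else 1) * (if m = j then K a else 1)
      = (if m = i then ∑ a, P a * F a else 1) * (if m = j then ∑ a, P a * K a else 1) := by
    intro m
    by_cases hmi : m = i
    · subst hmi
      simp [hij]
    · by_cases hmj : m = j <;> simp [hmi, hmj, h1, Ne.symm hij]
  rw [Finset.prod_congr rfl fun m _ => e3 m, Finset.prod_mul_distrib,
    Finset.prod_ite_eq' Finset.univ i (fun _ => ∑ a, P a * F a),
    Finset.prod_ite_eq' Finset.univ j (fun _ => ∑ a, P a * K a)]
  simp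

lemma second_moment {P : α → ℝ} (h1 : ∑ a, P a = 1) (n : ℕ) (h : α → ℝ)
    (hc : ∑ a, P a * h a = 0) :
    ∑ x : Fin n → α, prodPMF P n x * (∑ i, h (x i))^2
      = n * ∑ a, P a * (h a)^2 := by
  have expand : ∀ x : Fin n → α, prodPMF P n x * (∑ i, h (x i))^2
      = ∑ i, ∑ j, prodPMF P n x * (h (x i) * h (x j)) := by
    intro x
    rw [sq, Finset.sum_mul_sum]
    rw [Finset.mul_sum]
    exact Finset.sum_congr rfl fun i _ => by rw [Finset.mul_sum]
  rw [Finset.sum_congr rfl fun x _ => expand x]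
  rw [show (∑ x : Fin n → α, ∑ i : Fin n, ∑ j : Fin n, prodPMF P n x * (h (x i) * h (x j)))
      = ∑ i : Fin n, ∑ x : Fin n → α, ∑ j : Fin n, prodPMF P n x * (h (x i) * h (x j))
    from Finset.sum_comm]
  rw [Finset.sum_congr rfl fun i (_ : i ∈ Finset.univ) =>
    (Finset.sum_comm : ∑ x : Fin n → α, ∑ j : Fin n, prodPMF P n x * (h (x i) * h (x j))
      = ∑ j : Fin n, ∑ x : Fin n → α, prodPMF P n x * (h (x i) * h (x j)))]
  have inner : ∀ i : Fin n, ∑ j, ∑ x : Fin n → α, prodPMF P n x * (h (x i) * h (x j))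
      = ∑ a, P a * (h a)^2 := by
    intro i
    have term : ∀ j : Fin n, ∑ x : Fin n → α, prodPMF P n x * (h (x i) * h (x j))
        = if j = i then ∑ a, P a * (h a)^2 else 0 := by
      intro j
      by_cases hji : j = i
      · subst hji
        simp only [if_pos rfl]
        have e : ∀ x : Fin n → α, prodPMF P n x * (h (x j) * h (x j))
            = prodPMF P n x * (fun a => h a * h a) (x j) := fun x => rfl
        rw [Finset.sum_congr rfl fun x _ => e x, exp_single h1 j (fun a => h a * h a)]
        exact Finset.sum_congr rfl fun a _ => by ring
      · rw [if_neg hji, exp_pair h1 (fun hh => hji (hh.symm)) h h, hc, mul_zero]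
    rw [Finset.sum_congr rfl fun j _ => term j, Finset.sum_ite_eq' Finset.univ i]
    simp
  rw [Finset.sum_congr rfl fun i _ => inner i]
  simp [mul_comm]

lemma chebyshev {P : α → ℝ} (h0 : ∀ a, 0 ≤ P a) (h1 : ∑ a, P a = 1) (n : ℕ) (h : α → ℝ)
    (hc : ∑ a, P a * h a = 0) {t : ℝ} (ht : 0 < t) :
    ∑ x ∈ Finset.univ.filter (fun x : Fin n → α => t < |∑ i, h (x i)|), prodPMF P n x
      ≤ n * (∑ a, P a * (h a)^2) / t^2 := by
  have key : (∑ x ∈ Finset.univ.filter (fun x : Fin n → α => t < |∑ i, h (x i)|),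
      prodPMF P n x) * t^2 ≤ n * ∑ a, P a * (h a)^2 := by
    rw [Finset.sum_mul]
    calc ∑ x ∈ Finset.univ.filter (fun x : Fin n → α => t < |∑ i, h (x i)|),
          prodPMF P n x * t^2
        ≤ ∑ x ∈ Finset.univ.filter (fun x : Fin n → α => t < |∑ i, h (x i)|),
          prodPMF P n x * (∑ i, h (x i))^2 := by
          refine Finset.sum_le_sum fun x hx => ?_
          rw [Finset.mem_filter] at hx
          refine mul_le_mul_of_nonneg_left ?_ (prodPMF_nonneg h0 x)
          calc t^2 ≤ |∑ i, h (x i)|^2 := by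
                exact pow_le_pow_left₀ ht.le hx.2.le 2
            _ = (∑ i, h (x i))^2 := sq_abs _
      _ ≤ ∑ x : Fin n → α, prodPMF P n x * (∑ i, h (x i))^2 := by
          refine Finset.sum_le_sum_of_subset_of_nonneg (Finset.filter_subset _ _) ?_
          intro x _ _
          exact mul_nonneg (prodPMF_nonneg h0 x) (sq_nonneg _)
      _ = n * ∑ a, P a * (h a)^2 := second_moment h1 n h hc
  exact (le_div_iff₀ (by positivity)).2 key

end auxhelp

section auxcoupling
variable {β : Type*} [Fintype β] [DecidableEq β]

noncomputable def detQ (p : β → ℝ) (f : β → β) : β × β → ℝ :=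
  fun pr => if pr.1 = f pr.2 then p pr.2 else 0

lemma detQ_sum_aux (p : β → ℝ) (hp1 : ∑ b, p b = 1) (f : β → β) :
    ∑ pr : β × β, detQ p f pr = 1 := by
  rw [Fintype.sum_prod_type, Finset.sum_comm]
  have : ∀ b : β, ∑ a : β, detQ p f (a, b) = p b := by
    intro b
    unfold detQ
    simp [Finset.sum_ite_eq' Finset.univ (f b) (fun _ => p b)]
  rw [Finset.sum_congr rfl fun b _ => this b, hp1]

lemma detQ_pmf (p : β → ℝ) (hp : IsPMF p) (f : β → β) : IsPMF (detQ p f) := by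
  constructor
  · intro pr
    unfold detQ
    split_ifs
    · exact hp.1 _
    · exact le_refl 0
  · exact detQ_sum_aux p hp.2 f

lemma detQ_margY (p : β → ℝ) (f : β → β) (b : β) : margY (detQ p f) b = p b := by
  unfold margY detQ
  simp [Finset.sum_ite_eq' Finset.univ (f b) (fun _ => p b)]

lemma detQ_prDiff (p : β → ℝ) (f : β → β) :
    prDiff (detQ p f) = ∑ b ∈ Finset.univ.filter fun b => f b ≠ b, p b := by
  unfold prDiff
  rw [Finset.sum_filter, Fintype.sum_prod_type]
  have inner : ∀ a : β, (∑ b : β, if (a, b).1 ≠ (a, b).2 then detQ p f (a, b) else 0)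
      = ∑ b : β, if a = f b then (if a ≠ b then p b else 0) else 0 := by
    intro a
    refine Finset.sum_congr rfl fun b _ => ?_
    unfold detQ
    by_cases h1 : a = f b <;> by_cases h2 : a ≠ b <;> simp [h1, h2]
  rw [Finset.sum_congr rfl fun a _ => inner a, Finset.sum_comm]
  rw [Finset.sum_filter]
  refine Finset.sum_congr rfl fun b _ => ?_
  rw [Finset.sum_ite_eq' Finset.univ (f b) (fun a => if a ≠ b then p b else 0)]
  by_cases h : f b ≠ b <;> simp [h]

lemma detQ_supp (p : β → ℝ) (f : β → β) :
    (Finset.univ.filter fun a => 0 < margX (detQ p f) a) ⊆ Finset.univ.image f := by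
  intro a ha
  rw [Finset.mem_filter] at ha
  unfold margX detQ at ha
  have : ∃ b : β, (if a = f b then p b else 0) ≠ 0 := by
    by_contra hcon
    push_neg at hcon
    have : (∑ y : β, if a = f y then p y else 0) = 0 :=
      Finset.sum_eq_zero fun y _ => by simpa using hcon y
    rw [this] at ha
    exact lt_irrefl 0 ha.2
  obtain ⟨b, hb⟩ := this
  have : a = f b := by by_contra hne; simp [hne] at hb
  exact Finset.mem_image.2 ⟨b, Finset.mem_univ b, this.symm⟩

lemma diag_bound (Q : β × β → ℝ) (hQ : IsPMF Q) :
    1 - prDiff Q ≤ ∑ b ∈ Finset.univ.filter (fun b => 0 < margX Q b), margY Q b := by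
  obtain ⟨hQ0, hQ1⟩ := hQ
  have split := Finset.sum_filter_add_sum_filter_not Finset.univ
    (fun pr : β × β => pr.1 ≠ pr.2) Q
  have diag : ∑ pr ∈ Finset.univ.filter (fun pr : β × β => ¬ pr.1 ≠ pr.2), Q pr
      = ∑ b : β, Q (b, b) := by
    rw [Finset.sum_filter, Fintype.sum_prod_type]
    have e : ∀ a : β, (∑ b : β, if ¬ (a,b).1 ≠ (a,b).2 then Q (a,b) else 0)
        = ∑ b : β, if b = a then Q (a, b) else 0 := by
      intro a
      refine Finset.sum_congr rfl fun b _ => ?_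
      by_cases h : a = b
      · subst h; simp
      · simp [h, Ne.symm h]
    rw [Finset.sum_congr rfl fun a _ => e a]
    refine Finset.sum_congr rfl fun a _ => ?_
    rw [Finset.sum_ite_eq' Finset.univ a (fun b => Q (a, b))]
    simp
  have h1 : 1 - prDiff Q = ∑ b : β, Q (b, b) := by
    unfold prDiff; rw [← hQ1, ← split, ← diag]; ring
  rw [h1, ← Finset.sum_filter_add_sum_filter_not Finset.univ (fun b => 0 < margX Q b)
    (fun b => Q (b, b))]
  have h2 : ∑ b ∈ Finset.univ.filter (fun b => ¬ 0 < margX Q b), Q (b, b) = 0 := by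
    refine Finset.sum_eq_zero fun b hb => ?_
    rw [Finset.mem_filter] at hb
    have hm0 : margX Q b = 0 := le_antisymm (not_lt.1 hb.2)
      (Finset.sum_nonneg fun y _ => hQ0 _)
    have hle : Q (b, b) ≤ margX Q b :=
      Finset.single_le_sum (fun y _ => hQ0 (b, y)) (Finset.mem_univ b)
    exact le_antisymm (hm0 ▸ hle) (hQ0 _)
  rw [h2, add_zero]
  refine Finset.sum_le_sum fun b _ => ?_
  exact Finset.single_le_sum (fun a _ => hQ0 (a, b)) (Finset.mem_univ b)

end auxcoupling


/-- AEP for smoothed `H₀`: for i.i.d. copies of a finite random variable,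
`lim_{ε→0} lim_{n→∞} H₀^ε(X₁ⁿ)/n = H(X₁)`. -/
theorem h0_eps_iid_limit {α : Type*} [Fintype α] [DecidableEq α]
    (P : α → ℝ) (hP : IsPMF P) :
    ∀ η > 0, ∃ ε₀ > 0, ∀ ε, 0 < ε → ε ≤ ε₀ →
      ∃ N : ℕ, ∀ n ≥ N, |H0eps (prodPMF P n) ε / n - Hsh P| ≤ η := by
  classical
  obtain ⟨hP0, hP1⟩ := hP
  intro η hη
  set g : α → ℝ := fun a => - Real.logb 2 (P a) with hg
  have hμdef : Hsh P = ∑ a, P a * g a := by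
    unfold Hsh
    rw [← Finset.sum_neg_distrib]
    exact Finset.sum_congr rfl fun a _ => by simp [hg]
  set μ := Hsh P with hμ
  set h : α → ℝ := fun a => g a - μ with hh
  have hc : ∑ a, P a * h a = 0 := by
    have : ∀ a, P a * h a = P a * g a - P a * μ := fun a => by simp [hh]; ring
    rw [Finset.sum_congr rfl fun a _ => this a, Finset.sum_sub_distrib,
      ← Finset.sum_mul, hP1, ← hμdef]
    ring
  set V := ∑ a, P a * (h a)^2 with hV
  have hV0 : 0 ≤ V :=
    Finset.sum_nonneg fun a _ => mul_nonneg (hP0 a) (sq_nonneg _)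
  have hμ0 : 0 ≤ μ := by
    rw [hμdef]
    refine Finset.sum_nonneg fun a _ => mul_nonneg (hP0 a) ?_
    simp only [hg]
    rw [neg_nonneg]
    refine Real.logb_nonpos one_lt_two (hP0 a) ?_
    rw [← hP1]
    exact Finset.single_le_sum (fun b _ => hP0 b) (Finset.mem_univ a)
  set δ := η/2 with hδ
  have hδ0 : 0 < δ := by positivity
  refine ⟨1/4, by norm_num, ?_⟩
  intro ε hε hε4
  have hmin0 : 0 < min ε (1/4 : ℝ) := lt_min hε (by norm_num)
  obtain ⟨N0, hN0⟩ := exists_nat_gt (max (V / (δ^2 * min ε (1/4))) (2/η))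
  refine ⟨max N0 1, ?_⟩
  intro n hn
  have hn1 : 1 ≤ n := le_trans (le_max_right _ _) hn
  have hnN0 : N0 ≤ n := le_trans (le_max_left _ _) hn
  have hnpos : (0:ℝ) < n := by exact_mod_cast hn1
  have hnR : V / (δ^2 * min ε (1/4)) < n :=
    lt_of_lt_of_le (lt_of_le_of_lt (le_max_left _ _) hN0) (by exact_mod_cast hnN0)
  have hηn : 2/η < n :=
    lt_of_lt_of_le (lt_of_le_of_lt (le_max_right _ _) hN0) (by exact_mod_cast hnN0)
  set p := prodPMF P n with hpdef
  have hppmf : IsPMF p := ⟨fun x => prodPMF_nonneg hP0 x, prodPMF_sum hP1 n⟩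
  set T : Finset (Fin n → α) :=
    Finset.univ.filter (fun x => 0 < p x ∧ |∑ i, h (x i)| ≤ n * δ) with hT
  -- tail bound
  have tail : ∑ x ∈ Finset.univ.filter (fun x => x ∉ T), p x ≤ min ε (1/4) := by
    have cheb := chebyshev hP0 hP1 n h hc (t := n * δ) (by positivity)
    have step1 : ∑ x ∈ Finset.univ.filter (fun x => x ∉ T), p x
        ≤ ∑ x ∈ Finset.univ.filter (fun x : Fin n → α => (n:ℝ)*δ < |∑ i, h (x i)|), p x := by
      rw [Finset.sum_filter (fun x : Fin n → α => (n:ℝ)*δ < |∑ i, h (x i)|)]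
      calc ∑ x ∈ Finset.univ.filter (fun x => x ∉ T), p x
          ≤ ∑ x ∈ Finset.univ.filter (fun x => x ∉ T),
            (if (n:ℝ)*δ < |∑ i, h (x i)| then p x else 0) := by
            refine Finset.sum_le_sum fun x hx => ?_
            rw [Finset.mem_filter] at hx
            by_cases hcond : (n:ℝ)*δ < |∑ i, h (x i)|
            · rw [if_pos hcond]
            · rw [if_neg hcond]
              have : ¬ (0 < p x) := fun hpx =>
                hx.2 (Finset.mem_filter.2 ⟨Finset.mem_univ _, hpx, not_lt.1 hcond⟩)
              exact not_lt.1 this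
        _ ≤ ∑ x : Fin n → α, (if (n:ℝ)*δ < |∑ i, h (x i)| then p x else 0) := by
            refine Finset.sum_le_sum_of_subset_of_nonneg (Finset.filter_subset _ _) ?_
            intro x _ _
            split_ifs
            · exact hppmf.1 x
            · exact le_refl 0
    have step2 : (n:ℝ) * V / ((n:ℝ)*δ)^2 ≤ min ε (1/4) := by
      have hne : ((n:ℝ)*δ)^2 = (n:ℝ) * ((n:ℝ) * δ^2) := by ring
      have hmid : V < (n:ℝ) * (δ^2 * min ε (1/4)) :=
        (div_lt_iff₀ (by positivity)).1 hnR
      rw [div_le_iff₀ (by positivity), hne]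
      have : (n:ℝ) * V ≤ (n:ℝ) * ((n:ℝ) * (δ^2 * min ε (1/4))) :=
        mul_le_mul_of_nonneg_left hmid.le hnpos.le
      calc (n:ℝ) * V ≤ (n:ℝ) * ((n:ℝ) * (δ^2 * min ε (1/4))) := this
        _ = min ε (1/4) * ((n:ℝ) * ((n:ℝ) * δ^2)) := by ring
    exact le_trans step1 (le_trans cheb step2)
  -- pointwise bounds on T
  have pT : ∀ x ∈ T, (2:ℝ)^(-((n:ℝ)*(μ+δ))) ≤ p x ∧ p x ≤ (2:ℝ)^(-((n:ℝ)*(μ-δ))) := by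
    intro x hx
    rw [hT, Finset.mem_filter] at hx
    obtain ⟨-, hpx, habs⟩ := hx
    have hPi : ∀ i ∈ Finset.univ, P (x i) ≠ 0 := by
      intro i _ h0
      have : p x = 0 := by
        rw [hpdef]
        exact Finset.prod_eq_zero (Finset.mem_univ i) h0
      rw [this] at hpx
      exact lt_irrefl 0 hpx
    have hlog : Real.logb 2 (p x) = - ∑ i, g (x i) := by
      rw [hpdef]
      unfold prodPMF
      rw [Real.logb_prod Finset.univ _ hPi, ← Finset.sum_neg_distrib]
      exact Finset.sum_congr rfl fun i _ => by simp [hg]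
    have hpx2 : p x = (2:ℝ)^(-(∑ i, g (x i))) := by
      rw [← hlog]
      exact (Real.rpow_logb two_pos (by norm_num) hpx).symm
    have hsum : ∑ i, g (x i) = (∑ i, h (x i)) + (n:ℝ) * μ := by
      have : ∀ i : Fin n, h (x i) = g (x i) - μ := fun i => by simp [hh]
      rw [Finset.sum_congr rfl fun i _ => this i, Finset.sum_sub_distrib]
      simp [Finset.card_univ, mul_comm]
    obtain ⟨hlo, hhi⟩ := abs_le.1 habs
    constructor
    · rw [hpx2]
      rw [Real.rpow_le_rpow_left_iff one_lt_two]
      rw [hsum]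
      linarith
    · rw [hpx2]
      rw [Real.rpow_le_rpow_left_iff one_lt_two]
      rw [hsum]
      linarith
  -- size of T
  have Tcard : (T.card : ℝ) ≤ (2:ℝ)^((n:ℝ)*(μ+δ)) := by
    have h1 : (T.card : ℝ) * (2:ℝ)^(-((n:ℝ)*(μ+δ))) ≤ ∑ x ∈ T, p x := by
      have := Finset.card_nsmul_le_sum T p ((2:ℝ)^(-((n:ℝ)*(μ+δ))))
        (fun x hx => (pT x hx).1)
      simpa [nsmul_eq_mul] using this
    have h2 : ∑ x ∈ T, p x ≤ 1 := by
      rw [← hppmf.2]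
      exact Finset.sum_le_sum_of_subset_of_nonneg (Finset.subset_univ T)
        (fun x _ _ => hppmf.1 x)
    have hpow : (0:ℝ) < (2:ℝ)^(-((n:ℝ)*(μ+δ))) := Real.rpow_pos_of_pos two_pos _
    have h3 : (T.card : ℝ) ≤ 1 / (2:ℝ)^(-((n:ℝ)*(μ+δ))) :=
      (le_div_iff₀ hpow).2 (le_trans h1 h2)
    calc (T.card : ℝ) ≤ 1 / (2:ℝ)^(-((n:ℝ)*(μ+δ))) := h3
      _ = (2:ℝ)^((n:ℝ)*(μ+δ)) := by
        rw [Real.rpow_neg two_pos.le, one_div, inv_inv]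
  -- base point
  have hne : Nonempty α := by
    by_contra hcon
    rw [not_nonempty_iff] at hcon
    have : (∑ a, P a) = 0 := by
      rw [Finset.univ_eq_empty, Finset.sum_empty]
    rw [hP1] at this
    norm_num at this
  obtain ⟨a0⟩ := hne
  set c : Fin n → α := fun _ => a0 with hcdef
  set f : (Fin n → α) → (Fin n → α) := fun x => if x ∈ T then x else c with hf
  -- the candidate coupling
  have hfT : ∀ x : Fin n → α, f x ≠ x → x ∉ T := by
    intro x hx hxT
    exact hx (by rw [hf]; simp [hxT])
  have hprd : prDiff (detQ p f) ≤ ε := by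
    rw [detQ_prDiff p f]
    calc ∑ b ∈ Finset.univ.filter (fun b => f b ≠ b), p b
        ≤ ∑ b ∈ Finset.univ.filter (fun b => b ∉ T), p b := by
          refine Finset.sum_le_sum_of_subset_of_nonneg ?_ (fun x _ _ => hppmf.1 x)
          intro x hx
          rw [Finset.mem_filter] at hx ⊢
          exact ⟨hx.1, hfT x hx.2⟩
      _ ≤ min ε (1/4) := tail
      _ ≤ ε := min_le_left _ _
  have upper_mem : H0 (margX (detQ p f)) ∈ { v | ∃ Q : (Fin n → α) × (Fin n → α) → ℝ,
      IsPMF Q ∧ (∀ a, margY Q a = p a) ∧ prDiff Q ≤ ε ∧ v = H0 (margX Q) } :=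
    ⟨detQ p f, detQ_pmf p hppmf f, detQ_margY p f, hprd, rfl⟩
  have hSset : H0eps p ε = sInf { v | ∃ Q : (Fin n → α) × (Fin n → α) → ℝ,
      IsPMF Q ∧ (∀ a, margY Q a = p a) ∧ prDiff Q ≤ ε ∧ v = H0 (margX Q) } := rfl
  have hBdd : BddBelow { v | ∃ Q : (Fin n → α) × (Fin n → α) → ℝ,
      IsPMF Q ∧ (∀ a, margY Q a = p a) ∧ prDiff Q ≤ ε ∧ v = H0 (margX Q) } := by
    refine ⟨0, fun v hv => ?_⟩
    obtain ⟨Q, _, _, _, rfl⟩ := hv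
    exact H0_nonneg _
  -- upper bound on the value
  have upper_val : H0 (margX (detQ p f)) ≤ (n:ℝ)*(μ+δ) + 1 := by
    have hsub := detQ_supp p f
    have himg : Finset.univ.image f ⊆ insert c T := by
      intro a ha
      obtain ⟨b, -, hb⟩ := Finset.mem_image.1 ha
      rw [← hb, hf]
      by_cases hbT : b ∈ T
      · simp only [if_pos hbT]
        exact Finset.mem_insert_of_mem hbT
      · simp only [if_neg hbT]
        exact Finset.mem_insert_self _ _
    have hcardN : (Finset.univ.filter fun a => 0 < margX (detQ p f) a).card ≤ T.card + 1 :=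
      le_trans (Finset.card_le_card (hsub.trans himg)) (Finset.card_insert_le _ _)
    have hexp0 : (0:ℝ) ≤ (n:ℝ)*(μ+δ) := mul_nonneg hnpos.le (by linarith)
    have hone : (1:ℝ) ≤ (2:ℝ)^((n:ℝ)*(μ+δ)) := by
      calc (1:ℝ) = (2:ℝ)^(0:ℝ) := (Real.rpow_zero 2).symm
        _ ≤ (2:ℝ)^((n:ℝ)*(μ+δ)) := (Real.rpow_le_rpow_left_iff one_lt_two).2 hexp0
    have hrhs : ((Finset.univ.filter fun a => 0 < margX (detQ p f) a).card : ℝ)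
        ≤ (2:ℝ)^((n:ℝ)*(μ+δ) + 1) := by
      have e : (2:ℝ)^((n:ℝ)*(μ+δ) + 1) = (2:ℝ)^((n:ℝ)*(μ+δ)) * 2 := by
        rw [Real.rpow_add two_pos, Real.rpow_one]
      rw [e]
      have : ((Finset.univ.filter fun a => 0 < margX (detQ p f) a).card : ℝ)
          ≤ (T.card : ℝ) + 1 := by exact_mod_cast hcardN
      linarith
    unfold H0
    rcases Nat.eq_zero_or_pos (Finset.univ.filter fun a => 0 < margX (detQ p f) a).card
      with hz | hpos
    · rw [hz]
      simp only [Nat.cast_zero, Real.logb_zero]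
      linarith
    · have hposR : (0:ℝ) < ((Finset.univ.filter fun a => 0 < margX (detQ p f) a).card : ℝ) := by
        exact_mod_cast hpos
      calc Real.logb 2 ((Finset.univ.filter fun a => 0 < margX (detQ p f) a).card : ℝ)
          ≤ Real.logb 2 ((2:ℝ)^((n:ℝ)*(μ+δ) + 1)) :=
            Real.logb_le_logb_of_le one_lt_two hposR hrhs
        _ = (n:ℝ)*(μ+δ) + 1 := Real.logb_rpow two_pos (by norm_num)
  have hub : H0eps p ε ≤ (n:ℝ)*(μ+δ) + 1 := by
    rw [hSset]
    exact le_trans (csInf_le hBdd upper_mem) upper_val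
  -- lower bound
  have hlb : ∀ v ∈ { v | ∃ Q : (Fin n → α) × (Fin n → α) → ℝ,
      IsPMF Q ∧ (∀ a, margY Q a = p a) ∧ prDiff Q ≤ ε ∧ v = H0 (margX Q) },
      (n:ℝ)*(μ-δ) - 1 ≤ v := by
    rintro v ⟨Q, hQpmf, hQm, hQd, rfl⟩
    set S := Finset.univ.filter (fun b => 0 < margX Q b) with hS
    have key : 1 - ε ≤ ∑ b ∈ S, p b := by
      have hd := diag_bound Q hQpmf
      have : ∑ b ∈ S, margY Q b = ∑ b ∈ S, p b :=
        Finset.sum_congr rfl fun b _ => hQm b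
      rw [this] at hd
      linarith
    have splitS : ∑ b ∈ S, p b = ∑ b ∈ S ∩ T, p b + ∑ b ∈ S \ T, p b :=
      (Finset.sum_inter_add_sum_sdiff S T p).symm
    have bound1 : ∑ b ∈ S ∩ T, p b ≤ (S.card : ℝ) * (2:ℝ)^(-((n:ℝ)*(μ-δ))) := by
      have h1 : ∑ b ∈ S ∩ T, p b ≤ ((S ∩ T).card) • ((2:ℝ)^(-((n:ℝ)*(μ-δ)))) :=
        Finset.sum_le_card_nsmul _ _ _
          (fun x hx => (pT x (Finset.mem_of_mem_inter_right hx)).2)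
      have h2 : ((S ∩ T).card : ℝ) ≤ (S.card : ℝ) := by
        exact_mod_cast Finset.card_le_card (Finset.inter_subset_left)
      have hpow : (0:ℝ) ≤ (2:ℝ)^(-((n:ℝ)*(μ-δ))) := (Real.rpow_pos_of_pos two_pos _).le
      calc ∑ b ∈ S ∩ T, p b ≤ ((S ∩ T).card : ℝ) * (2:ℝ)^(-((n:ℝ)*(μ-δ))) := by
            simpa [nsmul_eq_mul] using h1
        _ ≤ (S.card : ℝ) * (2:ℝ)^(-((n:ℝ)*(μ-δ))) :=
            mul_le_mul_of_nonneg_right h2 hpow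
    have bound2 : ∑ b ∈ S \ T, p b ≤ min ε (1/4) := by
      refine le_trans ?_ tail
      refine Finset.sum_le_sum_of_subset_of_nonneg ?_ (fun x _ _ => hppmf.1 x)
      intro x hx
      rw [Finset.mem_sdiff] at hx
      exact Finset.mem_filter.2 ⟨Finset.mem_univ _, hx.2⟩
    have hhalf : (1:ℝ)/2 ≤ (S.card : ℝ) * (2:ℝ)^(-((n:ℝ)*(μ-δ))) := by
      have hm : min ε (1/4 : ℝ) ≤ 1/4 := min_le_right _ _
      linarith
    have hScard : (2:ℝ)^((n:ℝ)*(μ-δ) - 1) ≤ (S.card : ℝ) := by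
      have hinv : (2:ℝ)^(-((n:ℝ)*(μ-δ))) * (2:ℝ)^((n:ℝ)*(μ-δ)) = 1 := by
        rw [← Real.rpow_add two_pos]
        simp
      have e : (2:ℝ)^((n:ℝ)*(μ-δ) - 1) = (1/2) * (2:ℝ)^((n:ℝ)*(μ-δ)) := by
        rw [Real.rpow_sub two_pos, Real.rpow_one]
        ring
      rw [e]
      calc (1/2) * (2:ℝ)^((n:ℝ)*(μ-δ))
          ≤ ((S.card : ℝ) * (2:ℝ)^(-((n:ℝ)*(μ-δ)))) * (2:ℝ)^((n:ℝ)*(μ-δ)) :=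
            mul_le_mul_of_nonneg_right hhalf (Real.rpow_pos_of_pos two_pos _).le
        _ = (S.card : ℝ) * ((2:ℝ)^(-((n:ℝ)*(μ-δ))) * (2:ℝ)^((n:ℝ)*(μ-δ))) := by ring
        _ = (S.card : ℝ) := by rw [hinv, mul_one]
    have hSpos : (0:ℝ) < ((2:ℝ)^((n:ℝ)*(μ-δ) - 1)) := Real.rpow_pos_of_pos two_pos _
    unfold H0
    calc (n:ℝ)*(μ-δ) - 1 = Real.logb 2 ((2:ℝ)^((n:ℝ)*(μ-δ) - 1)) :=
          (Real.logb_rpow two_pos (by norm_num)).symm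
      _ ≤ Real.logb 2 ((S.card : ℝ)) :=
          Real.logb_le_logb_of_le one_lt_two hSpos hScard
  have hlow : (n:ℝ)*(μ-δ) - 1 ≤ H0eps p ε := by
    rw [hSset]
    exact le_csInf ⟨_, upper_mem⟩ hlb
  -- final arithmetic
  have hinv_n : 1/(n:ℝ) ≤ η/2 := by
    have h2 : 2 < (n:ℝ) * η := by
      have := (div_lt_iff₀ hη).1 hηn
      linarith
    rw [div_le_div_iff₀ hnpos (by norm_num : (0:ℝ) < 2)]
    nlinarith
  have e1 : ((n:ℝ)*(μ-δ) - 1)/(n:ℝ) ≤ H0eps p ε / (n:ℝ) := by gcongr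
  have e2 : H0eps p ε / (n:ℝ) ≤ ((n:ℝ)*(μ+δ) + 1)/(n:ℝ) := by gcongr
  have e3 : ((n:ℝ)*(μ-δ) - 1)/(n:ℝ) = μ - δ - 1/(n:ℝ) := by field_simp
  have e4 : ((n:ℝ)*(μ+δ) + 1)/(n:ℝ) = μ + δ + 1/(n:ℝ) := by field_simp
  rw [abs_le]
  constructor
  · rw [e3] at e1
    linarith
  · rw [e4] at e2
    linarith
end
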